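/- arXiv:2403.17448 — 5 statements merged into one kernel-verified Lean document; each statement's English description precedes it below -/
import Mathlib

section
/- Fix constants U > 0, γ > 0, Δ > 0. Let z, β̃ : ℝ → ℝ be differentiable functions satisfying the linearized closed-loop VFALOS error dynamics z'(t) = (β̃(t)·Δ·U − z(t)·U)/√(Δ² + z(t)²) and β̃'(t) = −γ·Δ·z(t)/√(Δ² + z(t)²). Define V(t) = ½·z(t)² + (U/(2γ))·β̃(t)². Then for every t, V is differentiable at t with V'(t) = −U·z(t)²/√(Δ² + z(t)²). -/
theorem HasDerivAt.half_sq_add_const_mul_sq {f g : ℝ → ℝ} {f' g' c t : ℝ}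
    (hf : HasDerivAt f f' t) (hg : HasDerivAt g g' t) :
    HasDerivAt (fun t => (1 / 2) * f t ^ 2 + c * g t ^ 2) (f t * f' + 2 * c * g t * g') t :=
  (((hf.fun_pow 2).const_mul (1 / 2)).fun_add ((hg.fun_pow 2).const_mul c)).congr_deriv
    (by push_cast; ring)

/-- The adaptation law is chosen so that the sideslip term `β̃ Δ U z / s` of `z z'` cancels. -/
theorem vfalos_cross_term_cancel {U γ Δ : ℝ} (hγ : γ ≠ 0) (z β s : ℝ) :
    z * ((β * Δ * U - z * U) / s) + 2 * (U / (2 * γ)) * β * (-(γ * Δ * z) / s)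
      = -(U * z ^ 2) / s := by
  simp only [div_eq_mul_inv]
  field_simp
  ring

theorem vfalos_lyapunov_deriv_general (U γ Δ : ℝ) (hγ : 0 < γ)
    (z βt : ℝ → ℝ) (hz : Differentiable ℝ z) (hβ : Differentiable ℝ βt)
    (hz' : ∀ t, deriv z t = (βt t * Δ * U - z t * U) / Real.sqrt (Δ ^ 2 + z t ^ 2))
    (hβ' : ∀ t, deriv βt t = -(γ * Δ * z t) / Real.sqrt (Δ ^ 2 + z t ^ 2)) :
    ∀ t, HasDerivAt (fun t => (1 / 2) * z t ^ 2 + (U / (2 * γ)) * βt t ^ 2)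
      (-(U * z t ^ 2) / Real.sqrt (Δ ^ 2 + z t ^ 2)) t := by
  intro t
  have hV := (hz t).hasDerivAt.half_sq_add_const_mul_sq (hβ t).hasDerivAt (c := U / (2 * γ))
  rwa [hz' t, hβ' t, vfalos_cross_term_cancel hγ.ne'] at hV

/-- Along solutions of the linearized closed-loop VFALOS error dynamics,
the Lyapunov function candidate `V = ½ z² + (U/(2γ)) β̃²` is differentiable
with derivative `V' = −U z²/√(Δ² + z²)`. -/
theorem vfalos_lyapunov_deriv (U γ Δ : ℝ) (hU : 0 < U) (hγ : 0 < γ) (hΔ : 0 < Δ)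
    (z βt : ℝ → ℝ) (hz : Differentiable ℝ z) (hβ : Differentiable ℝ βt)
    (hz' : ∀ t, deriv z t = (βt t * Δ * U - z t * U) / Real.sqrt (Δ ^ 2 + z t ^ 2))
    (hβ' : ∀ t, deriv βt t = -(γ * Δ * z t) / Real.sqrt (Δ ^ 2 + z t ^ 2)) :
    ∀ t, HasDerivAt (fun t => (1 / 2) * z t ^ 2 + (U / (2 * γ)) * βt t ^ 2)
      (-(U * z t ^ 2) / Real.sqrt (Δ ^ 2 + z t ^ 2)) t :=
  vfalos_lyapunov_deriv_general U γ Δ hγ z βt hz hβ hz' hβ'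
end

section
/- Fix constants U > 0, γ > 0, Δ > 0. Let z, β̃ : ℝ → ℝ be differentiable functions satisfying z'(t) = (β̃(t)·Δ·U − z(t)·U)/√(Δ² + z(t)²) and β̃'(t) = −γ·Δ·z(t)/√(Δ² + z(t)²), and define V(t) = ½·z(t)² + (U/(2γ))·β̃(t)². Then V is non-increasing on ℝ: for all s ≤ t, V(t) ≤ V(s). -/
/-- Along solutions of the linearized closed-loop VFALOS error dynamics,
the Lyapunov function candidate `V = ½ z² + (U/(2γ)) β̃²` is non-increasing. -/
theorem vfalos_lyapunov_antitone (U γ Δ : ℝ) (hU : 0 < U) (hγ : 0 < γ) (hΔ : 0 < Δ)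
    (z βt : ℝ → ℝ) (hz : Differentiable ℝ z) (hβ : Differentiable ℝ βt)
    (hz' : ∀ t, deriv z t = (βt t * Δ * U - z t * U) / Real.sqrt (Δ ^ 2 + z t ^ 2))
    (hβ' : ∀ t, deriv βt t = -(γ * Δ * z t) / Real.sqrt (Δ ^ 2 + z t ^ 2))
    (V : ℝ → ℝ) (hV : ∀ t, V t = (1 / 2) * z t ^ 2 + (U / (2 * γ)) * βt t ^ 2) :
    ∀ s t : ℝ, s ≤ t → V t ≤ V s := by
  have hVfun : V = fun t => (1 / 2) * z t ^ 2 + (U / (2 * γ)) * βt t ^ 2 :=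
    funext hV
  have hVdiff : Differentiable ℝ V := by
    rw [hVfun]
    exact (differentiable_const _ |>.mul (hz.pow 2)).add
      (differentiable_const _ |>.mul (hβ.pow 2))
  have key : ∀ t, deriv V t ≤ 0 := by
    intro t
    have hs : 0 < Real.sqrt (Δ ^ 2 + z t ^ 2) := by
      apply Real.sqrt_pos.mpr
      positivity
    have hd : deriv V t = z t * deriv z t + (U / γ) * (βt t * deriv βt t) := by
      rw [hVfun]
      rw [deriv_fun_add ((differentiable_const _ |>.fun_mul (hz.fun_pow 2)) t)
        ((differentiable_const _ |>.fun_mul (hβ.fun_pow 2)) t),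
        deriv_const_mul _ ((hz.fun_pow 2) t), deriv_const_mul _ ((hβ.fun_pow 2) t),
        deriv_fun_pow (hz t) 2, deriv_fun_pow (hβ t) 2]
      ring
    rw [hd, hz' t, hβ' t]
    have : z t * ((βt t * Δ * U - z t * U) / Real.sqrt (Δ ^ 2 + z t ^ 2)) +
        U / γ * (βt t * (-(γ * Δ * z t) / Real.sqrt (Δ ^ 2 + z t ^ 2))) =
        -(U * z t ^ 2) / Real.sqrt (Δ ^ 2 + z t ^ 2) := by
      field_simp
      ring
    rw [this]
    apply div_nonpos_of_nonpos_of_nonneg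
    · nlinarith [sq_nonneg (z t)]
    · exact hs.le
  intro s t hst
  exact antitone_of_deriv_nonpos hVdiff key hst
end

section
/- Fix constants U > 0, γ > 0, Δ > 0. Let z, β̃ : ℝ → ℝ be differentiable functions satisfying z'(t) = (β̃(t)·Δ·U − z(t)·U)/√(Δ² + z(t)²) and β̃'(t) = −γ·Δ·z(t)/√(Δ² + z(t)²), and define V(t) = ½·z(t)² + (U/(2γ))·β̃(t)². Then for every t ≥ 0, z(t)² ≤ 2·V(0) and β̃(t)² ≤ (2γ/U)·V(0); in particular, both the shifted cross-track error and the sideslip estimation error remain uniformly bounded. -/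
/-- Along solutions of the linearized closed-loop VFALOS error dynamics, both the
shifted cross-track error `z` and the sideslip estimation error `β̃` remain
uniformly bounded in terms of the initial value of the Lyapunov function:
`z(t)² ≤ 2 V(0)` and `β̃(t)² ≤ (2γ/U) V(0)` for all `t ≥ 0`. -/
theorem vfalos_errors_bounded (U γ Δ : ℝ) (hU : 0 < U) (hγ : 0 < γ) (hΔ : 0 < Δ)
    (z βt : ℝ → ℝ) (hz : Differentiable ℝ z) (hβ : Differentiable ℝ βt)
    (hz' : ∀ t, deriv z t = (βt t * Δ * U - z t * U) / Real.sqrt (Δ ^ 2 + z t ^ 2))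
    (hβ' : ∀ t, deriv βt t = -(γ * Δ * z t) / Real.sqrt (Δ ^ 2 + z t ^ 2))
    (V : ℝ → ℝ) (hV : ∀ t, V t = (1 / 2) * z t ^ 2 + (U / (2 * γ)) * βt t ^ 2) :
    ∀ t : ℝ, 0 ≤ t → z t ^ 2 ≤ 2 * V 0 ∧ βt t ^ 2 ≤ (2 * γ / U) * V 0 := by
  have hVfun : V = fun t => (1 / 2) * z t ^ 2 + (U / (2 * γ)) * βt t ^ 2 := funext hV
  have hVdiff : Differentiable ℝ V := by
    rw [hVfun]
    exact ((hz.pow 2).const_mul _).add ((hβ.pow 2).const_mul _)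
  have hderiv : ∀ t, deriv V t ≤ 0 := by
    intro t
    have hpos : (0:ℝ) < Δ ^ 2 + z t ^ 2 := by positivity
    have hs : 0 < Real.sqrt (Δ ^ 2 + z t ^ 2) := Real.sqrt_pos.2 hpos
    have h1 : HasDerivAt V
        ((1 / 2) * ((2:ℕ) * z t ^ 1 * deriv z t)
          + (U / (2 * γ)) * ((2:ℕ) * βt t ^ 1 * deriv βt t)) t := by
      rw [hVfun]
      exact ((((hz t).hasDerivAt).pow 2).const_mul _).add
        ((((hβ t).hasDerivAt).pow 2).const_mul _)
    have hD := h1.deriv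
    rw [hD, hz' t, hβ' t]
    have : (1 / 2) * ((2:ℕ) * z t ^ 1 *
          ((βt t * Δ * U - z t * U) / Real.sqrt (Δ ^ 2 + z t ^ 2)))
        + (U / (2 * γ)) * ((2:ℕ) * βt t ^ 1 *
          (-(γ * Δ * z t) / Real.sqrt (Δ ^ 2 + z t ^ 2)))
        = -(U * z t ^ 2) / Real.sqrt (Δ ^ 2 + z t ^ 2) := by
      field_simp
      ring
    rw [this]
    apply div_nonpos_of_nonpos_of_nonneg
    · nlinarith [sq_nonneg (z t)]
    · exact hs.le
  have hmono : Antitone V := by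
    intro a b hab
    exact (antitone_of_deriv_nonpos hVdiff hderiv) hab
  intro t ht
  have hVt : V t ≤ V 0 := hmono ht
  have hVz := hV t
  constructor
  · nlinarith [sq_nonneg (βt t), mul_pos hU hγ, sq_nonneg (z t),
      mul_nonneg (div_nonneg hU.le (by linarith : (0:ℝ) ≤ 2 * γ)) (sq_nonneg (βt t))]
  · have h2 : (U / (2 * γ)) * βt t ^ 2 ≤ V 0 := by
      nlinarith [sq_nonneg (z t)]
    calc βt t ^ 2 = (2 * γ / U) * ((U / (2 * γ)) * βt t ^ 2) := by
          field_simp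
      _ ≤ (2 * γ / U) * V 0 :=
          mul_le_mul_of_nonneg_left h2 (by positivity)
end

section
/- Fix constants U > 0, γ > 0, Δ > 0. Let z, β̃ : ℝ → ℝ be differentiable functions satisfying z'(t) = (β̃(t)·Δ·U − z(t)·U)/√(Δ² + z(t)²) and β̃'(t) = −γ·Δ·z(t)/√(Δ² + z(t)²), and define V(t) = ½·z(t)² + (U/(2γ))·β̃(t)². Then for every T ≥ 0, the integral ∫₀ᵀ U·z(t)²/√(Δ² + z(t)²) dt equals V(0) − V(T), and in particular is bounded above by V(0). -/
/-- Along solutions of the linearized closed-loop VFALOS error dynamics, the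
integral of the Lyapunov dissipation rate over `[0, T]` equals `V(0) − V(T)`,
and in particular is bounded above by `V(0)`. -/
theorem vfalos_dissipation_integral (U γ Δ : ℝ) (hU : 0 < U) (hγ : 0 < γ) (hΔ : 0 < Δ)
    (z βt : ℝ → ℝ) (hz : Differentiable ℝ z) (hβ : Differentiable ℝ βt)
    (hz' : ∀ t, deriv z t = (βt t * Δ * U - z t * U) / Real.sqrt (Δ ^ 2 + z t ^ 2))
    (hβ' : ∀ t, deriv βt t = -(γ * Δ * z t) / Real.sqrt (Δ ^ 2 + z t ^ 2))
    (V : ℝ → ℝ) (hV : ∀ t, V t = (1 / 2) * z t ^ 2 + (U / (2 * γ)) * βt t ^ 2) :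
    ∀ T : ℝ, 0 ≤ T →
      (∫ t in (0 : ℝ)..T, U * z t ^ 2 / Real.sqrt (Δ ^ 2 + z t ^ 2)) = V 0 - V T ∧
      (∫ t in (0 : ℝ)..T, U * z t ^ 2 / Real.sqrt (Δ ^ 2 + z t ^ 2)) ≤ V 0 := by
  intro T hT
  have hs : ∀ t, 0 < Real.sqrt (Δ ^ 2 + z t ^ 2) := by
    intro t
    apply Real.sqrt_pos.2
    positivity
  have hVd : ∀ t, HasDerivAt V (-(U * z t ^ 2 / Real.sqrt (Δ ^ 2 + z t ^ 2))) t := by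
    intro t
    have h1 : HasDerivAt z (deriv z t) t := (hz t).hasDerivAt
    have h2 : HasDerivAt βt (deriv βt t) t := (hβ t).hasDerivAt
    have : HasDerivAt (fun t => (1 / 2) * z t ^ 2 + (U / (2 * γ)) * βt t ^ 2)
        ((1 / 2) * (2 * z t * deriv z t) + (U / (2 * γ)) * (2 * βt t * deriv βt t)) t := by
      have := ((h1.pow 2).const_mul (1/2 : ℝ)).add ((h2.pow 2).const_mul (U / (2 * γ)))
      refine this.congr_deriv ?_
      push_cast
      ring
    have heq : V = fun t => (1 / 2) * z t ^ 2 + (U / (2 * γ)) * βt t ^ 2 := funext hV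
    rw [heq]
    convert this using 1
    rw [hz' t, hβ' t]
    have hsne := (hs t).ne'
    field_simp
    ring
  have hcont : Continuous (fun t => U * z t ^ 2 / Real.sqrt (Δ ^ 2 + z t ^ 2)) := by
    apply Continuous.div (continuous_const.mul (hz.continuous.pow 2))
      (by exact (continuous_const.add (hz.continuous.pow 2)).sqrt)
    intro t; exact (hs t).ne'
  have hint : IntervalIntegrable (fun t => -(U * z t ^ 2 / Real.sqrt (Δ ^ 2 + z t ^ 2)))
      MeasureTheory.volume 0 T := (hcont.neg).intervalIntegrable _ _
  have key : (∫ t in (0:ℝ)..T, -(U * z t ^ 2 / Real.sqrt (Δ ^ 2 + z t ^ 2))) = V T - V 0 :=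
    intervalIntegral.integral_eq_sub_of_hasDerivAt (fun t _ => hVd t) hint
  rw [intervalIntegral.integral_neg] at key
  have hmain : (∫ t in (0:ℝ)..T, U * z t ^ 2 / Real.sqrt (Δ ^ 2 + z t ^ 2)) = V 0 - V T := by
    linarith
  refine ⟨hmain, ?_⟩
  have hVT : 0 ≤ V T := by
    rw [hV T]; positivity
  linarith
end

section
/- Fix U > 0 and Δ > 0. Let z : [0, ∞) → ℝ be a differentiable solution of the nominal cross-track error dynamics z'(t) = −U·z(t)/√(Δ² + z(t)²), and let ξ > 0 satisfy |z(0)| ≤ ξ. Then for all t ≥ 0, |z(t)| ≤ |z(0)|·exp(−M·t) where M = U/√(Δ² + ξ²). In particular z(t) → 0 as t → ∞ and the equilibrium z = 0 is exponentially attractive on every ball. -/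
/-- Exponential stability of the nominal VFALOS cross-track error dynamics
`z' = −U z/√(Δ² + z²)` on the ball of radius `ξ`: if `|z(0)| ≤ ξ`, then
`|z(t)| ≤ |z(0)|·exp(−M t)` with `M = U/√(Δ² + ξ²)` for all `t ≥ 0`, and
`z(t) → 0` as `t → ∞`. -/
theorem vfalos_nominal_exp_stable (U Δ : ℝ) (hU : 0 < U) (hΔ : 0 < Δ)
    (z : ℝ → ℝ) (hz : ∀ t : ℝ, 0 ≤ t →
      HasDerivAt z (-(U * z t) / Real.sqrt (Δ ^ 2 + z t ^ 2)) t)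
    (ξ : ℝ) (hξ : 0 < ξ) (h0 : |z 0| ≤ ξ) :
    (∀ t : ℝ, 0 ≤ t →
      |z t| ≤ |z 0| * Real.exp (-(U / Real.sqrt (Δ ^ 2 + ξ ^ 2)) * t)) ∧
    Filter.Tendsto z Filter.atTop (nhds 0) := by
  set M : ℝ := U / Real.sqrt (Δ ^ 2 + ξ ^ 2) with hMdef
  have hsx : (0:ℝ) < Real.sqrt (Δ ^ 2 + ξ ^ 2) := Real.sqrt_pos.2 (by positivity)
  have hMpos : 0 < M := div_pos hU hsx
  have hspos : ∀ t : ℝ, (0:ℝ) < Real.sqrt (Δ ^ 2 + z t ^ 2) :=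
    fun t => Real.sqrt_pos.2 (by positivity)
  have hcontz : ContinuousOn z (Set.Ici 0) :=
    fun t ht => ((hz t ht).continuousAt).continuousWithinAt
  -- derivative of z²
  have hsq : ∀ t : ℝ, 0 ≤ t → HasDerivAt (fun s => z s ^ 2)
      (-(2 * U * z t ^ 2) / Real.sqrt (Δ ^ 2 + z t ^ 2)) t := by
    intro t ht
    have h := (hz t ht).fun_pow 2
    refine h.congr_deriv ?_
    push_cast
    ring
  -- z² is nonincreasing on [0, ∞)
  have hanti : AntitoneOn (fun s => z s ^ 2) (Set.Ici 0) := by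
    apply antitoneOn_of_deriv_nonpos (convex_Ici 0)
    · exact hcontz.pow 2
    · intro x hx
      rw [interior_Ici] at hx
      exact (hsq x hx.le).differentiableAt.differentiableWithinAt
    · intro x hx
      rw [interior_Ici] at hx
      rw [(hsq x hx.le).deriv]
      apply div_nonpos_of_nonpos_of_nonneg
      · nlinarith [sq_nonneg (z x)]
      · exact (hspos x).le
  have hbound : ∀ t : ℝ, 0 ≤ t → z t ^ 2 ≤ ξ ^ 2 := by
    intro t ht
    have h1 : z t ^ 2 ≤ z 0 ^ 2 := hanti Set.self_mem_Ici ht ht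
    have h2 : z 0 ^ 2 ≤ ξ ^ 2 := by
      rw [← sq_abs (z 0)]
      exact pow_le_pow_left₀ (abs_nonneg _) h0 2
    linarith
  -- the comparison: M ≤ U / √(Δ² + z t ²) on [0, ∞)
  have hMle : ∀ t : ℝ, 0 ≤ t → M ≤ U / Real.sqrt (Δ ^ 2 + z t ^ 2) := by
    intro t ht
    apply div_le_div_of_nonneg_left hU.le (hspos t)
    exact Real.sqrt_le_sqrt (by nlinarith [hbound t ht])
  -- g t = z t ² · exp (2 M t) is nonincreasing on [0, ∞)
  have hg : ∀ t : ℝ, 0 ≤ t → HasDerivAt (fun s => z s ^ 2 * Real.exp (2 * M * s))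
      ((-(2 * U * z t ^ 2) / Real.sqrt (Δ ^ 2 + z t ^ 2)) * Real.exp (2 * M * t)
        + z t ^ 2 * (Real.exp (2 * M * t) * (2 * M * 1))) t := by
    intro t ht
    exact (hsq t ht).mul (((hasDerivAt_id t).const_mul (2 * M)).exp)
  have hganti : AntitoneOn (fun s => z s ^ 2 * Real.exp (2 * M * s)) (Set.Ici 0) := by
    apply antitoneOn_of_deriv_nonpos (convex_Ici 0)
    · exact (hcontz.pow 2).mul (Real.continuous_exp.comp (continuous_const.mul continuous_id)).continuousOn
    · intro x hx
      rw [interior_Ici] at hx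
      exact (hg x hx.le).differentiableAt.differentiableWithinAt
    · intro x hx
      rw [interior_Ici] at hx
      rw [(hg x hx.le).deriv]
      set s := Real.sqrt (Δ ^ 2 + z x ^ 2) with hs
      have hsp : 0 < s := hspos x
      have hMu : M ≤ U / s := hMle x hx.le
      have hes : (0:ℝ) < Real.exp (2 * M * x) := Real.exp_pos _
      have heq : (-(2 * U * z x ^ 2) / s) * Real.exp (2 * M * x)
          + z x ^ 2 * (Real.exp (2 * M * x) * (2 * M * 1))
          = 2 * z x ^ 2 * Real.exp (2 * M * x) * (M - U / s) := by
        field_simp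
        ring
      rw [heq]
      apply mul_nonpos_of_nonneg_of_nonpos
      · positivity
      · linarith
  have hgle : ∀ t : ℝ, 0 ≤ t → z t ^ 2 * Real.exp (2 * M * t) ≤ z 0 ^ 2 := by
    intro t ht
    have := hganti Set.self_mem_Ici ht ht
    simpa using this
  -- the pointwise exponential bound
  have hfinal : ∀ t : ℝ, 0 ≤ t → |z t| ≤ |z 0| * Real.exp (-M * t) := by
    intro t ht
    have he : (0:ℝ) < Real.exp (2 * M * t) := Real.exp_pos _
    have h1 : z t ^ 2 ≤ (|z 0| * Real.exp (-M * t)) ^ 2 := by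
      have heq : (|z 0| * Real.exp (-M * t)) ^ 2
          = z 0 ^ 2 * (Real.exp (2 * M * t))⁻¹ := by
        rw [mul_pow, sq_abs, ← Real.exp_nat_mul, ← Real.exp_neg]
        ring_nf
      rw [heq]
      calc z t ^ 2 = (z t ^ 2 * Real.exp (2 * M * t)) * (Real.exp (2 * M * t))⁻¹ := by
            field_simp
        _ ≤ z 0 ^ 2 * (Real.exp (2 * M * t))⁻¹ :=
            mul_le_mul_of_nonneg_right (hgle t ht) (inv_nonneg.2 he.le)
    have h2 := Real.sqrt_le_sqrt h1
    rw [Real.sqrt_sq_eq_abs, Real.sqrt_sq (by positivity)] at h2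
    exact h2
  refine ⟨fun t ht => by simpa using hfinal t ht, ?_⟩
  -- the bound tends to 0
  have hlim : Filter.Tendsto (fun t : ℝ => |z 0| * Real.exp (-M * t))
      Filter.atTop (nhds 0) := by
    have h1 : Filter.Tendsto (fun t : ℝ => -M * t) Filter.atTop Filter.atBot := by
      exact Filter.Tendsto.const_mul_atTop_of_neg (neg_neg_iff_pos.2 hMpos) Filter.tendsto_id
    have h2 : Filter.Tendsto (fun t : ℝ => Real.exp (-M * t)) Filter.atTop (nhds 0) :=
      Real.tendsto_exp_atBot.comp h1
    simpa using h2.const_mul (|z 0|)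
  apply squeeze_zero_norm' _ hlim
  filter_upwards [Filter.eventually_ge_atTop (0:ℝ)] with t ht
  simpa [Real.norm_eq_abs] using hfinal t ht
end
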